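/- For the formula φ = ((…((T₁ ∧ T₂) ∧ T₃) ∧ …) ∧ Tₙ) with pos = {p₁,…,p_{n-1}} the positions of the nested left conjuncts, a map I : pos → formulae is a disjunctive interpolant if and only if (I(p₁),…,I(p_{n-1})) is an inductive sequence of interpolants, i.e., T₁ ⊨ I(p₁), I(pᵢ) ∧ T_{i+1} ⊨ I(p_{i+1}) for 1 ≤ i < n-1, I(p_{n-1}) ∧ Tₙ ⊨ false, and each I(pᵢ) only contains variables common to T₁,…,Tᵢ and T_{i+1},…,Tₙ. -/
import Mathlib


namespace Stmt5

/-- Formulae of the constraint language, viewed as and/or combinations of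
constraints (atoms). Positions "underneath only ∧ and ∨" are exactly the
positions visible in this tree structure; any other connectives are
swallowed inside the atoms.  `tr`/`fls` are the formulas true/false. -/
inductive Fml (Con : Type) : Type
  | atom (c : Con)
  | tr
  | fls
  | and (l r : Fml Con)
  | or (l r : Fml Con)

/-- Positions: paths in the formula tree (`true` = left argument, `false` = right). -/
abbrev Pos := List Bool

variable {S V Con : Type} (U : S → Type)
  (interp : Con → (s : S) → (V → U s) → Prop) (cfv : Con → Set V)

/-- Evaluation of a formula in a structure `s` under a variable assignment. -/
def evalF : Fml Con → (s : S) → (V → U s) → Prop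
  | .atom c, s, α => interp c s α
  | .tr, _, _ => True
  | .fls, _, _ => False
  | .and l r, s, α => evalF l s α ∧ evalF r s α
  | .or l r, s, α => evalF l s α ∨ evalF r s α

/-- Free variables of a formula. -/
def ffv : Fml Con → Set V
  | .atom c => cfv c
  | .tr => ∅
  | .fls => ∅
  | .and l r => ffv l ∪ ffv r
  | .or l r => ffv l ∪ ffv r

/-- The subformula φ↓p at a position, if the position exists in φ. -/
def subAt : Fml Con → Pos → Option (Fml Con)
  | F, [] => some F
  | .and l r, b :: p => subAt (if b then l else r) p
  | .or l r, b :: p => subAt (if b then l else r) p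
  | _, _ :: _ => none

/-- φ[p/ψ]: replace the subformula at position p by ψ. -/
def replaceAt : Fml Con → Pos → Fml Con → Fml Con
  | _, [], ψ => ψ
  | .and l r, b :: p, ψ =>
      if b then .and (replaceAt l p ψ) r else .and l (replaceAt r p ψ)
  | .or l r, b :: p, ψ =>
      if b then .or (replaceAt l p ψ) r else .or l (replaceAt r p ψ)
  | F, _ :: _, _ => F

/-- Simultaneous (outermost-first) substitution of constraints at a set of
positions given by σ; `cur` is the current path. -/
def msubstAux (σ : Pos → Option Con) : Pos → Fml Con → Fml Con
  | cur, .and l r =>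
      match σ cur with
      | some c => .atom c
      | none => .and (msubstAux σ (cur ++ [true]) l) (msubstAux σ (cur ++ [false]) r)
  | cur, .or l r =>
      match σ cur with
      | some c => .atom c
      | none => .or (msubstAux σ (cur ++ [true]) l) (msubstAux σ (cur ++ [false]) r)
  | cur, F =>
      match σ cur with
      | some c => .atom c
      | none => F

def msubst (σ : Pos → Option Con) (F : Fml Con) : Fml Con := msubstAux σ [] F

/-- p is strictly above q. -/
def strictAbove (p q : Pos) : Prop := p <+: q ∧ p ≠ q

/-- q is a direct pos-child of p: q ∈ pos, p < q, and no r ∈ pos with p < r < q. -/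
def dirChild (pos : Set Pos) (p q : Pos) : Prop :=
  q ∈ pos ∧ strictAbove p q ∧ ¬ ∃ r ∈ pos, strictAbove p r ∧ strictAbove r q

/-- q is a topmost position of pos. -/
def topmost (pos : Set Pos) (q : Pos) : Prop :=
  q ∈ pos ∧ ¬ ∃ r ∈ pos, strictAbove r q

open Classical in
/-- Substitution map replacing each direct pos-child q of p by the constraint I(q). -/
noncomputable def childSub (pos : Set Pos) (I : Pos → Con) (p : Pos) : Pos → Option Con :=
  fun q => if dirChild pos p q then some (I q) else none

open Classical in
/-- Substitution map replacing each topmost position q of pos by I(q). -/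
noncomputable def topSub (pos : Set Pos) (I : Pos → Con) : Pos → Option Con :=
  fun q => if topmost pos q then some (I q) else none

/-- Entailment over the class of structures. -/
def Entails (F G : Fml Con) : Prop := ∀ s α, evalF U interp F s α → evalF U interp G s α

/-- Unsatisfiability over the class of structures. -/
def Unsat (F : Fml Con) : Prop := ∀ s α, ¬ evalF U interp F s α

/-- Disjunctive interpolant for φ and pos (Definition 2 of the paper). -/
def DisjInterpolant (φ : Fml Con) (pos : Set Pos) (I : Pos → Con) : Prop :=
  -- (1) for each p ∈ pos, (φ[q₁/I(q₁),…,qₙ/I(qₙ)])↓p ⊨ I(p), the qᵢ the direct pos-children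
  (∀ p ∈ pos, ∀ G, subAt (msubst (childSub pos I p) φ) p = some G →
      Entails U interp G (.atom (I p))) ∧
  -- (2) for the topmost positions, φ[q₁/I(q₁),…,qₙ/I(qₙ)] ⊨ false
  Unsat U interp (msubst (topSub pos I) φ) ∧
  -- (3) fv(I(p)) ⊆ fv(φ↓p) ∩ fv(φ[p/true])
  (∀ p ∈ pos, ∀ G, subAt φ p = some G →
      cfv (I p) ⊆ ffv cfv G ∩ ffv cfv (replaceAt φ p .tr))

/-- The left-nested conjunction ((…((T₀ ∧ T₁) ∧ T₂) ∧ …) ∧ T_k). -/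
def nest (T : ℕ → Con) : ℕ → Fml Con
  | 0 => .atom (T 0)
  | k + 1 => .and (nest T k) (.atom (T (k + 1)))

/-! ### Auxiliary lemmas for the proof of Statement 5 -/

section Aux

lemma replicate_prefix {j k : ℕ} {a : Bool} :
    List.replicate j a <+: List.replicate k a ↔ j ≤ k := by
  constructor
  · intro h; simpa using h.length_le
  · intro h
    exact ⟨List.replicate (k - j) a, by rw [← List.replicate_add]; congr 1; omega⟩

lemma replicate_eq {j k : ℕ} {a : Bool} :
    List.replicate j a = List.replicate k a ↔ j = k := by
  constructor
  · intro h; simpa using congrArg List.length h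
  · rintro rfl; rfl

lemma strictAbove_repl {j k : ℕ} :
    strictAbove (List.replicate j true) (List.replicate k true) ↔ j < k := by
  unfold strictAbove
  rw [replicate_prefix, Ne, replicate_eq]
  omega

lemma mem_pos_iff {m : ℕ} {p : Pos} :
    p ∈ ((fun j => List.replicate j true) '' Set.Icc 1 (m+1)) ↔
      ∃ j, 1 ≤ j ∧ j ≤ m + 1 ∧ p = List.replicate j true := by
  constructor
  · rintro ⟨j, hj, rfl⟩
    exact ⟨j, hj.1, hj.2, rfl⟩
  · rintro ⟨j, h1, h2, rfl⟩
    exact ⟨j, ⟨h1, h2⟩, rfl⟩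

lemma dirChild_char (m j : ℕ) (q : Pos) :
    dirChild ((fun j => List.replicate j true) '' Set.Icc 1 (m+1))
        (List.replicate j true) q ↔
      (j + 1 ≤ m + 1 ∧ q = List.replicate (j+1) true) := by
  unfold dirChild
  constructor
  · rintro ⟨hq, hab, hno⟩
    obtain ⟨k, hk1, hk2, rfl⟩ := mem_pos_iff.mp hq
    rw [strictAbove_repl] at hab
    by_cases hk : k = j + 1
    · subst hk; exact ⟨hk2, rfl⟩
    · exfalso
      exact hno ⟨List.replicate (j+1) true,
        mem_pos_iff.mpr ⟨j+1, by omega, by omega, rfl⟩,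
        strictAbove_repl.mpr (by omega), strictAbove_repl.mpr (by omega)⟩
  · rintro ⟨h, rfl⟩
    refine ⟨mem_pos_iff.mpr ⟨j+1, by omega, h, rfl⟩,
      strictAbove_repl.mpr (by omega), ?_⟩
    rintro ⟨r, hr, h1, h2⟩
    obtain ⟨l, hl1, hl2, rfl⟩ := mem_pos_iff.mp hr
    rw [strictAbove_repl] at h1 h2
    omega

lemma topmost_char (m : ℕ) (q : Pos) :
    topmost ((fun j => List.replicate j true) '' Set.Icc 1 (m+1)) q ↔
      q = List.replicate 1 true := by
  unfold topmost
  constructor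
  · rintro ⟨hq, hno⟩
    obtain ⟨k, hk1, hk2, rfl⟩ := mem_pos_iff.mp hq
    by_cases hk : k = 1
    · subst hk; rfl
    · exfalso
      exact hno ⟨List.replicate 1 true,
        mem_pos_iff.mpr ⟨1, le_refl 1, by omega, rfl⟩,
        strictAbove_repl.mpr (by omega)⟩
  · rintro rfl
    refine ⟨mem_pos_iff.mpr ⟨1, le_refl 1, by omega, rfl⟩, ?_⟩
    rintro ⟨r, hr, h1⟩
    obtain ⟨l, hl1, hl2, rfl⟩ := mem_pos_iff.mp hr
    rw [strictAbove_repl] at h1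
    omega

lemma msubstAux_here (σ : Pos → Option Con) (cur : Pos) (c : Con) (F : Fml Con)
    (h : σ cur = some c) : msubstAux σ cur F = .atom c := by
  cases F <;> simp [msubstAux, h]

lemma msubstAux_none (σ : Pos → Option Con) (F : Fml Con) :
    ∀ cur, (∀ q, σ (cur ++ q) = none) → msubstAux σ cur F = F := by
  induction F with
  | atom c => intro cur h; simp [msubstAux, show σ cur = none by simpa using h []]
  | tr => intro cur h; simp [msubstAux, show σ cur = none by simpa using h []]
  | fls => intro cur h; simp [msubstAux, show σ cur = none by simpa using h []]
  | and l r ihl ihr =>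
    intro cur h
    have hc : σ cur = none := by simpa using h []
    simp only [msubstAux, hc]
    rw [ihl _ (fun q => by rw [List.append_assoc]; exact h (true :: q)),
      ihr _ (fun q => by rw [List.append_assoc]; exact h (false :: q))]
  | or l r ihl ihr =>
    intro cur h
    have hc : σ cur = none := by simpa using h []
    simp only [msubstAux, hc]
    rw [ihl _ (fun q => by rw [List.append_assoc]; exact h (true :: q)),
      ihr _ (fun q => by rw [List.append_assoc]; exact h (false :: q))]

lemma msubstAux_atom (σ : Pos → Option Con) (cur : Pos) (a : Con)
    (h : σ cur = none) : msubstAux σ cur (.atom a) = .atom a := by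
  simp [msubstAux, h]

/-- `nest` with its left subtree at depth `t` replaced by the atom `c`. -/
def repl (T : ℕ → Con) (c : Con) : ℕ → ℕ → Fml Con
  | 0, _ => .atom c
  | _+1, 0 => .atom c
  | t+1, k+1 => .and (repl T c t k) (.atom (T (k+1)))

lemma msubstAux_single (T : ℕ → Con) (σ : Pos → Option Con) (c : Con) :
    ∀ t k cur, t + 1 ≤ k →
    (∀ q, σ (cur ++ q) = if q = List.replicate (t+1) true then some c else none) →
    msubstAux σ cur (nest T k) = repl T c (t+1) k := by
  intro t
  induction t with
  | zero =>
    intro k cur hk h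
    obtain ⟨k', rfl⟩ : ∃ k', k = k' + 1 := ⟨k - 1, by omega⟩
    have hc : σ cur = none := by
      simpa [List.replicate_succ] using h []
    have hl : σ (cur ++ [true]) = some c := by
      simpa using h [true]
    have hr : σ (cur ++ [false]) = none := by
      simpa [List.replicate_succ] using h [false]
    simp only [nest, msubstAux, hc]
    rw [msubstAux_here _ _ _ _ hl, hr]
    rfl
  | succ t ih =>
    intro k cur hk h
    obtain ⟨k', rfl⟩ : ∃ k', k = k' + 1 := ⟨k - 1, by omega⟩
    have hc : σ cur = none := by
      simpa [List.replicate_succ] using h []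
    have hr : σ (cur ++ [false]) = none := by
      simpa [List.replicate_succ] using h [false]
    simp only [nest, msubstAux, hc]
    rw [ih k' (cur ++ [true]) (by omega) ?_, hr]
    · rfl
    · intro q
      rw [List.append_assoc]
      have := h (true :: q)
      simpa [List.replicate_succ] using this

lemma subAt_nil (F : Fml Con) : subAt F [] = some F := by
  cases F <;> rfl

lemma subAt_nest (T : ℕ → Con) :
    ∀ j k, j ≤ k → subAt (nest T k) (List.replicate j true) = some (nest T (k - j)) := by
  intro j
  induction j with
  | zero => intro k _; rw [List.replicate_zero, subAt_nil, Nat.sub_zero]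
  | succ j ih =>
    intro k hk
    obtain ⟨k', rfl⟩ : ∃ k', k = k' + 1 := ⟨k - 1, by omega⟩
    rw [List.replicate_succ]
    show subAt (nest T k') (List.replicate j true) = _
    have e : k' + 1 - (j + 1) = k' - j := by omega
    rw [ih k' (by omega), e]

lemma subAt_repl (T : ℕ → Con) (c : Con) :
    ∀ t k, t < k → subAt (repl T c (t+1) k) (List.replicate t true) =
      some (.and (.atom c) (.atom (T (k - t)))) := by
  intro t
  induction t with
  | zero =>
    intro k hk
    obtain ⟨k', rfl⟩ : ∃ k', k = k' + 1 := ⟨k - 1, by omega⟩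
    rfl
  | succ t ih =>
    intro k hk
    obtain ⟨k', rfl⟩ : ∃ k', k = k' + 1 := ⟨k - 1, by omega⟩
    rw [List.replicate_succ]
    show subAt (repl T c (t+1) k') (List.replicate t true) = _
    have e : k' + 1 - (t + 1) = k' - t := by omega
    rw [ih k' (by omega), e]

lemma mem_ffv_nest (T : ℕ → Con) :
    ∀ k (x : V), x ∈ ffv cfv (nest T k) ↔ ∃ i, i ≤ k ∧ x ∈ cfv (T i) := by
  intro k
  induction k with
  | zero =>
    intro x
    simp [nest, ffv]
  | succ k ih =>
    intro x
    simp only [nest, ffv, Set.mem_union, ih]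
    constructor
    · rintro (⟨i, hi, hx⟩ | hx)
      · exact ⟨i, by omega, hx⟩
      · exact ⟨k+1, le_refl _, hx⟩
    · rintro ⟨i, hi, hx⟩
      rcases Nat.lt_or_ge i (k+1) with h | h
      · exact Or.inl ⟨i, by omega, hx⟩
      · have : i = k + 1 := by omega
        subst this; exact Or.inr hx

lemma mem_ffv_replace (T : ℕ → Con) :
    ∀ t k, t < k → ∀ (x : V),
      (x ∈ ffv cfv (replaceAt (nest T k) (List.replicate (t+1) true) .tr) ↔
        ∃ i, k - t ≤ i ∧ i ≤ k ∧ x ∈ cfv (T i)) := by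
  intro t
  induction t with
  | zero =>
    intro k hk x
    obtain ⟨k', rfl⟩ : ∃ k', k = k' + 1 := ⟨k - 1, by omega⟩
    show x ∈ ffv cfv (.and (replaceAt (nest T k') [] .tr) (.atom (T (k'+1)))) ↔ _
    simp only [replaceAt, ffv, Set.mem_union, Set.mem_empty_iff_false, false_or]
    constructor
    · intro hx; exact ⟨k'+1, by omega, le_refl _, hx⟩
    · rintro ⟨i, h1, h2, hx⟩
      have : i = k' + 1 := by omega
      subst this; exact hx
  | succ t ih =>
    intro k hk x
    obtain ⟨k', rfl⟩ : ∃ k', k = k' + 1 := ⟨k - 1, by omega⟩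
    rw [List.replicate_succ]
    show x ∈ ffv cfv (.and (replaceAt (nest T k') (List.replicate (t+1) true) .tr)
      (.atom (T (k'+1)))) ↔ _
    simp only [ffv, Set.mem_union, ih k' (by omega)]
    constructor
    · rintro (⟨i, h1, h2, hx⟩ | hx)
      · exact ⟨i, by omega, by omega, hx⟩
      · exact ⟨k'+1, by omega, le_refl _, hx⟩
    · rintro ⟨i, h1, h2, hx⟩
      rcases Nat.lt_or_ge i (k'+1) with h | h
      · exact Or.inl ⟨i, by omega, by omega, hx⟩
      · have : i = k' + 1 := by omega
        subst this; exact Or.inr hx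

lemma childSub_eq_none (m j : ℕ) (I : Pos → Con) (hj : m + 1 ≤ j) (q : Pos) :
    childSub ((fun j => List.replicate j true) '' Set.Icc 1 (m+1)) I
      (List.replicate j true) q = none := by
  unfold childSub
  rw [if_neg]
  intro hd
  have := (dirChild_char m j q).mp hd
  omega

lemma childSub_eq (m j : ℕ) (I : Pos → Con) (hj : j + 1 ≤ m + 1) (q : Pos) :
    childSub ((fun j => List.replicate j true) '' Set.Icc 1 (m+1)) I
      (List.replicate j true) q =
      if q = List.replicate (j+1) true then some (I (List.replicate (j+1) true))
      else none := by
  unfold childSub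
  by_cases hq : q = List.replicate (j+1) true
  · subst hq
    rw [if_pos ((dirChild_char m j _).mpr ⟨hj, rfl⟩), if_pos rfl]
  · rw [if_neg, if_neg hq]
    intro hd
    exact hq ((dirChild_char m j q).mp hd).2

lemma topSub_eq (m : ℕ) (I : Pos → Con) (q : Pos) :
    topSub ((fun j => List.replicate j true) '' Set.Icc 1 (m+1)) I q =
      if q = List.replicate 1 true then some (I (List.replicate 1 true))
      else none := by
  unfold topSub
  by_cases hq : q = List.replicate 1 true
  · subst hq; rw [if_pos ((topmost_char m _).mpr rfl), if_pos rfl]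
  · rw [if_neg, if_neg hq]
    intro ht; exact hq ((topmost_char m q).mp ht)

lemma key (m : ℕ) (T : ℕ → Con) (I : Pos → Con) :
    DisjInterpolant U interp cfv (nest T (m+1))
        ((fun j => List.replicate j true) '' Set.Icc 1 (m+1)) I ↔
      ((∀ s α, interp (T 0) s α → interp (I (List.replicate (m+1-0) true)) s α) ∧
       (∀ i < m, ∀ s α, interp (I (List.replicate (m+1-i) true)) s α →
            interp (T (i+1)) s α →
            interp (I (List.replicate (m+1-(i+1)) true)) s α) ∧
       (∀ s α, ¬ (interp (I (List.replicate (m+1-m) true)) s α ∧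
            interp (T (m+1)) s α)) ∧
       (∀ i ≤ m, cfv (I (List.replicate (m+1-i) true)) ⊆
            (⋃ j ∈ Set.Iic i, cfv (T j)) ∩
              (⋃ j ∈ Set.Icc (i+1) (m+1), cfv (T j)))) := by
  -- computation of the substituted formulas
  have hms : ∀ j, j + 1 ≤ m + 1 →
      msubst (childSub ((fun j => List.replicate j true) '' Set.Icc 1 (m+1)) I
          (List.replicate j true)) (nest T (m+1)) =
        repl T (I (List.replicate (j+1) true)) (j+1) (m+1) := by
    intro j hj
    exact msubstAux_single T _ _ j (m+1) [] (by omega)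
      (fun q => by rw [List.nil_append]; exact childSub_eq m j I hj q)
  have hmsTop : List.replicate (m+1) true ∈
      ((fun j => List.replicate j true) '' Set.Icc 1 (m+1)) :=
    mem_pos_iff.mpr ⟨m+1, by omega, le_refl _, rfl⟩
  have hmsNone :
      msubst (childSub ((fun j => List.replicate j true) '' Set.Icc 1 (m+1)) I
          (List.replicate (m+1) true)) (nest T (m+1)) = nest T (m+1) :=
    msubstAux_none _ _ [] (fun q => childSub_eq_none m (m+1) I (le_refl _) q)
  have hTop : msubst (topSub ((fun j => List.replicate j true) '' Set.Icc 1 (m+1)) I)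
        (nest T (m+1)) = repl T (I (List.replicate 1 true)) 1 (m+1) :=
    msubstAux_single T _ _ 0 (m+1) [] (by omega)
      (fun q => by rw [List.nil_append]; simpa using topSub_eq m I q)
  have hsub1 : ∀ j, j ≤ m →
      subAt (msubst (childSub ((fun j => List.replicate j true) '' Set.Icc 1 (m+1)) I
          (List.replicate j true)) (nest T (m+1))) (List.replicate j true) =
        some (.and (.atom (I (List.replicate (j+1) true))) (.atom (T (m+1-j)))) := by
    intro j hj
    rw [hms j (by omega)]
    exact subAt_repl T _ j (m+1) (by omega)
  have hsub2 :
      subAt (msubst (childSub ((fun j => List.replicate j true) '' Set.Icc 1 (m+1)) I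
          (List.replicate (m+1) true)) (nest T (m+1))) (List.replicate (m+1) true) =
        some (nest T 0) := by
    rw [hmsNone, subAt_nest T (m+1) (m+1) (le_refl _), Nat.sub_self]
  constructor
  · rintro ⟨d1, d2, d3⟩
    have key1 : ∀ j, 1 ≤ j → j ≤ m → ∀ s α,
        interp (I (List.replicate (j+1) true)) s α → interp (T (m+1-j)) s α →
        interp (I (List.replicate j true)) s α := by
      intro j h1 h2 s α ha hb
      exact d1 _ (mem_pos_iff.mpr ⟨j, h1, by omega, rfl⟩) _ (hsub1 j h2) s α ⟨ha, hb⟩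
    refine ⟨?_, ?_, ?_, ?_⟩
    · intro s α h
      exact d1 _ hmsTop _ hsub2 s α h
    · intro i hi s α ha hb
      have e1 : m + 1 - i = (m - i) + 1 := by omega
      have e2 : m + 1 - (i + 1) = m - i := by omega
      have e3 : i + 1 = m + 1 - (m - i) := by omega
      rw [e2]
      rw [e1] at ha
      rw [e3] at hb
      exact key1 (m - i) (by omega) (by omega) s α ha hb
    · intro s α hh
      have e1 : m + 1 - m = 1 := by omega
      rw [e1] at hh
      rw [hTop] at d2
      exact d2 s α hh
    · intro i hi x hx
      have e1 : m + 1 - (m + 1 - i) = i := by omega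
      have hd3 := d3 _ (mem_pos_iff.mpr ⟨m+1-i, by omega, by omega, rfl⟩) _
        (subAt_nest T (m+1-i) (m+1) (by omega))
      rw [e1] at hd3
      obtain ⟨hx1, hx2⟩ := hd3 hx
      constructor
      · obtain ⟨l, hl, hxl⟩ := (mem_ffv_nest cfv T _ x).mp hx1
        simp only [Set.mem_iUnion, Set.mem_Iic]
        exact ⟨l, hl, hxl⟩
      · have e2 : m + 1 - i = (m - i) + 1 := by omega
        rw [e2] at hx2
        obtain ⟨l, hl1, hl2, hxl⟩ := (mem_ffv_replace cfv T (m-i) (m+1) (by omega) x).mp hx2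
        simp only [Set.mem_iUnion, Set.mem_Icc]
        exact ⟨l, ⟨by omega, hl2⟩, hxl⟩
  · rintro ⟨h1, h2, h3, h4⟩
    refine ⟨?_, ?_, ?_⟩
    · intro p hp G hG
      obtain ⟨j, hj1, hj2, rfl⟩ := mem_pos_iff.mp hp
      rcases Nat.lt_or_ge j (m+1) with hj | hj
      · -- j ≤ m
        rw [hsub1 j (by omega)] at hG
        obtain rfl := Option.some.inj hG
        intro s α hh
        have ha : interp (I (List.replicate (j+1) true)) s α := hh.1
        have hb : interp (T (m+1-j)) s α := hh.2
        have e1 : j + 1 = m + 1 - (m - j) := by omega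
        have e2 : m + 1 - j = (m - j) + 1 := by omega
        have e3 : j = m + 1 - ((m - j) + 1) := by omega
        rw [e1] at ha
        rw [e2] at hb
        show interp (I (List.replicate j true)) s α
        rw [e3]
        exact h2 (m - j) (by omega) s α ha hb
      · -- j = m+1
        have : j = m + 1 := by omega
        subst this
        rw [hsub2] at hG
        obtain rfl := Option.some.inj hG
        intro s α hh
        have e0 : m + 1 = m + 1 - 0 := by omega
        show interp (I (List.replicate (m+1) true)) s α
        rw [e0]
        exact h1 s α hh
    · rw [hTop]
      intro s α hh
      have e1 : (1 : ℕ) = m + 1 - m := by omega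
      have ha : interp (I (List.replicate 1 true)) s α := hh.1
      rw [e1] at ha
      exact h3 s α ⟨ha, hh.2⟩
    · intro p hp G hG
      obtain ⟨j, hj1, hj2, rfl⟩ := mem_pos_iff.mp hp
      rw [subAt_nest T j (m+1) hj2] at hG
      obtain rfl := Option.some.inj hG
      have e1 : j = m + 1 - (m + 1 - j) := by omega
      intro x hx
      rw [e1] at hx
      obtain ⟨hx1, hx2⟩ := h4 (m+1-j) (by omega) hx
      constructor
      · simp only [Set.mem_iUnion, Set.mem_Iic] at hx1
        obtain ⟨l, hl, hxl⟩ := hx1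
        exact (mem_ffv_nest cfv T _ x).mpr ⟨l, hl, hxl⟩
      · simp only [Set.mem_iUnion, Set.mem_Icc] at hx2
        obtain ⟨l, ⟨hl1, hl2⟩, hxl⟩ := hx2
        have e2 : j = (j - 1) + 1 := by omega
        rw [e2]
        exact (mem_ffv_replace cfv T (j-1) (m+1) (by omega) x).mpr
          ⟨l, by omega, hl2, hxl⟩

end Aux

/-- for φ = ((…((T₀ ∧ T₁) ∧ T₂) ∧ …) ∧ T_{n-1}) with pos the
positions of the nested left conjuncts (the position of T₀ ∧ … ∧ Tᵢ is the
path `replicate (n-1-i) true`), a map I is a disjunctive interpolant iff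
the values J i = I(position of T₀ ∧ … ∧ Tᵢ), 0 ≤ i ≤ n-2, form an inductive
sequence of interpolants: T₀ ⊨ J 0, J i ∧ T_{i+1} ⊨ J (i+1), J (n-2) ∧ T_{n-1} ⊨ false,
and each J i only contains variables common to T₀,…,Tᵢ and T_{i+1},…,T_{n-1}. -/
theorem stmt5 (n : ℕ) (hn : 2 ≤ n) (T : ℕ → Con) (I : Pos → Con) :
    DisjInterpolant U interp cfv (nest T (n - 1))
        ((fun j => List.replicate j true) '' Set.Icc 1 (n - 1)) I
      ↔ (let J : ℕ → Con := fun i => I (List.replicate (n - 1 - i) true)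
        -- T₀ ⊨ J 0
        (∀ s α, interp (T 0) s α → interp (J 0) s α) ∧
        -- J i ∧ T_{i+1} ⊨ J (i+1) for 0 ≤ i < n-2
        (∀ i < n - 2, ∀ s α, interp (J i) s α → interp (T (i + 1)) s α →
            interp (J (i + 1)) s α) ∧
        -- J (n-2) ∧ T_{n-1} ⊨ false
        (∀ s α, ¬ (interp (J (n - 2)) s α ∧ interp (T (n - 1)) s α)) ∧
        -- variable condition
        (∀ i ≤ n - 2, cfv (J i) ⊆
            (⋃ j ∈ Set.Iic i, cfv (T j)) ∩ (⋃ j ∈ Set.Icc (i + 1) (n - 1), cfv (T j)))) := by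
  obtain ⟨m, rfl⟩ : ∃ m, n = m + 2 := ⟨n - 2, by omega⟩
  exact key U interp cfv m T I

end Stmt5
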